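/- arXiv:1502.02968 — 3 statements merged into one kernel-verified Lean document; each statement's English description precedes it below -/
import Mathlib

section
/- Let μ be a probability measure on ℝ with finite first moment, fixed T > 0, and F(T,y) = ∫ exp(θy − θ²T/2) dμ(θ), Θ̂(T,y) = ∫ θ exp(θy − θ²T/2) dμ(θ)/F(T,y). Assume μ is supported on (0,∞). For t ∈ [0,T), y ∈ ℝ, γ < 1, define f(γ) = ∫ Θ̂(T,y+z) q(z;γ) dz, where q(z;γ) = F(T,y+z)^{1/(1−γ)} φ_{T−t}(z)/∫ F(T,y+w)^{1/(1−γ)} φ_{T−t}(w) dw. Then f(γ) > 0 and f is monotone increasing on (−∞,1). -/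
open MeasureTheory Real

/-!
Both monotonicity statements are instances of one Chebyshev-type inequality: if `a` is monotone
and `v / u` is monotone (a monotone likelihood ratio), then the `v`-average of `a` dominates its
`u`-average, because `(a w - a z) (u z v w - u w v z) ≥ 0` integrates over `ν ⊗ ν` to twice the
difference of the cross products. The posterior mean `Θ̂(T, ·)` is such an average with
`u, v = exp (θ s - θ² T / 2)` for `s₁ ≤ s₂`, so it is increasing, and then `f(γ)` is the average of
the increasing function `Θ̂(T, y + ·)` against `F(T, y + ·) ^ p φ`, whose likelihood ratio in
`p = 1 / (1 - γ)` is a power of the increasing function `F(T, y + ·)`.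
-/

theorem integral_pos_of_ae_pos {α : Type*} [MeasurableSpace α] {μ : Measure α} [NeZero μ]
    {f : α → ℝ} (hf : ∀ᵐ x ∂μ, 0 < f x) (hfi : Integrable f μ) : 0 < ∫ x, f x ∂μ := by
  rw [integral_pos_iff_support_of_nonneg_ae (hf.mono fun _ hx => hx.le) hfi]
  refine pos_iff_ne_zero.2 fun hzero => ?_
  obtain ⟨x, hx, hx'⟩ := (hf.and (measure_eq_zero_iff_ae_notMem.1 hzero)).exists
  exact hx' hx.ne'

theorem rpow_mul_rpow_le_rpow_mul_rpow {x y p q : ℝ} (hx : 0 < x) (hxy : x ≤ y) (hpq : p ≤ q) :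
    y ^ p * x ^ q ≤ x ^ p * y ^ q := by
  have hy : 0 < y := hx.trans_le hxy
  calc y ^ p * x ^ q = y ^ p * x ^ p * x ^ (q - p) := by
        rw [mul_assoc, ← rpow_add hx, add_sub_cancel]
    _ ≤ y ^ p * x ^ p * y ^ (q - p) := by gcongr
    _ = x ^ p * y ^ q := by rw [mul_comm (y ^ p), mul_assoc, ← rpow_add hy, add_sub_cancel]

section Chebyshev

variable {α : Type*} [LinearOrder α] [MeasurableSpace α] {ν : Measure α} [SFinite ν]
  {a u v : α → ℝ}

theorem integral_mul_mul_integral_le_of_monotone (ha : Monotone a)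
    (huv : ∀ ⦃z w⦄, z ≤ w → u w * v z ≤ u z * v w)
    (hau : Integrable (fun z => a z * u z) ν) (hu : Integrable u ν)
    (hav : Integrable (fun z => a z * v z) ν) (hv : Integrable v ν) :
    (∫ z, a z * u z ∂ν) * ∫ z, v z ∂ν ≤ (∫ z, a z * v z ∂ν) * ∫ z, u z ∂ν := by
  have hpt : ∀ z w, 0 ≤ (a w - a z) * (u z * v w - u w * v z) := by
    intro z w
    rcases le_total z w with h | h
    · exact mul_nonneg (sub_nonneg.2 (ha h)) (sub_nonneg.2 (huv h))
    · exact mul_nonneg_of_nonpos_of_nonpos (sub_nonpos.2 (ha h)) (sub_nonpos.2 (huv h))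
  have hexpand : ∫ p, (a p.2 - a p.1) * (u p.1 * v p.2 - u p.2 * v p.1) ∂(ν.prod ν) =
      2 * ((∫ z, a z * v z ∂ν) * (∫ z, u z ∂ν) - (∫ z, a z * u z ∂ν) * ∫ z, v z ∂ν) := by
    have hsplit : (fun p : α × α => (a p.2 - a p.1) * (u p.1 * v p.2 - u p.2 * v p.1)) =
        fun p => (u p.1 * (a p.2 * v p.2) - v p.1 * (a p.2 * u p.2)) -
          (a p.1 * u p.1 * v p.2 - a p.1 * v p.1 * u p.2) := by
      funext p; ring
    rw [hsplit, integral_sub, integral_sub (hu.mul_prod hav) (hv.mul_prod hau),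
      integral_sub (hau.mul_prod hv) (hav.mul_prod hu)]
    · rw [integral_prod_mul u (fun z => a z * v z), integral_prod_mul v (fun z => a z * u z),
        integral_prod_mul (fun z => a z * u z) v, integral_prod_mul (fun z => a z * v z) u]
      ring
    · exact (hu.mul_prod hav).sub (hv.mul_prod hau)
    · exact (hau.mul_prod hv).sub (hav.mul_prod hu)
  have hnonneg : 0 ≤ ∫ p, (a p.2 - a p.1) * (u p.1 * v p.2 - u p.2 * v p.1) ∂(ν.prod ν) :=
    integral_nonneg fun p => hpt p.1 p.2
  linarith

theorem integral_mul_div_integral_le_of_monotone (ha : Monotone a)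
    (huv : ∀ ⦃z w⦄, z ≤ w → u w * v z ≤ u z * v w)
    (hau : Integrable (fun z => a z * u z) ν) (hu : Integrable u ν)
    (hav : Integrable (fun z => a z * v z) ν) (hv : Integrable v ν)
    (hu0 : 0 < ∫ z, u z ∂ν) (hv0 : 0 < ∫ z, v z ∂ν) :
    (∫ z, a z * u z ∂ν) / ∫ z, u z ∂ν ≤ (∫ z, a z * v z ∂ν) / ∫ z, v z ∂ν :=
  (div_le_div_iff₀ hu0 hv0).2 (integral_mul_mul_integral_le_of_monotone ha huv hau hu hav hv)

theorem integral_mul_rpow_mul_div_le {g w : α → ℝ} (ha : Monotone a) (hg : Monotone g)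
    (hg0 : ∀ z, 0 < g z) (hw : ∀ z, 0 ≤ w z) {p q : ℝ} (hpq : p ≤ q)
    (hp : Integrable (fun z => g z ^ p * w z) ν) (hq : Integrable (fun z => g z ^ q * w z) ν)
    (hp0 : 0 < ∫ z, g z ^ p * w z ∂ν) (hq0 : 0 < ∫ z, g z ^ q * w z ∂ν)
    (hap : Integrable (fun z => a z * (g z ^ p * w z / ∫ x, g x ^ p * w x ∂ν)) ν)
    (haq : Integrable (fun z => a z * (g z ^ q * w z / ∫ x, g x ^ q * w x ∂ν)) ν) :
    ∫ z, a z * (g z ^ p * w z / ∫ x, g x ^ p * w x ∂ν) ∂ν ≤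
      ∫ z, a z * (g z ^ q * w z / ∫ x, g x ^ q * w x ∂ν) ∂ν := by
  have hratio : ∀ ⦃z x⦄, z ≤ x → g x ^ p * w x * (g z ^ q * w z) ≤ g z ^ p * w z * (g x ^ q * w x) :=
    fun z x hzx => by
      have := rpow_mul_rpow_le_rpow_mul_rpow (hg0 z) (hg hzx) hpq
      nlinarith [mul_nonneg (hw z) (hw x)]
  have hunnorm {r : ℝ} (hr : ∫ x, g x ^ r * w x ∂ν ≠ 0)
      (h : Integrable (fun z => a z * (g z ^ r * w z / ∫ x, g x ^ r * w x ∂ν)) ν) :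
      Integrable (fun z => a z * (g z ^ r * w z)) ν := by
    simpa only [mul_div_assoc', div_mul_cancel₀ _ hr] using h.mul_const (∫ x, g x ^ r * w x ∂ν)
  simp only [mul_div_assoc', integral_div]
  exact integral_mul_div_integral_le_of_monotone ha hratio (hunnorm hp0.ne' hap) hp
    (hunnorm hq0.ne' haq) hq hp0 hq0

end Chebyshev

theorem monotone_integral_mul_exp_div_integral_exp {μ : Measure ℝ} [NeZero μ] [SFinite μ]
    (g : ℝ → ℝ) (hE : ∀ s, Integrable (fun θ => exp (θ * s - g θ)) μ)
    (hN : ∀ s, Integrable (fun θ => θ * exp (θ * s - g θ)) μ) :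
    Monotone fun s => (∫ θ, θ * exp (θ * s - g θ) ∂μ) / ∫ θ, exp (θ * s - g θ) ∂μ := by
  intro s₁ s₂ hs
  refine integral_mul_div_integral_le_of_monotone (a := id) monotone_id (fun z w hzw => ?_)
    (hN s₁) (hE s₁) (hN s₂) (hE s₂) (integral_exp_pos (hE s₁)) (integral_exp_pos (hE s₂))
  rw [← exp_add, ← exp_add]
  exact exp_le_exp.2 (by nlinarith)

theorem stmt5_general (μ : Measure ℝ) [IsProbabilityMeasure μ]
    (hsupp : ∀ᵐ θ ∂μ, 0 < θ)
    (T t y : ℝ) (htT : t < T)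
    (F Θhat : ℝ → ℝ)
    (hF : ∀ s, F s = ∫ θ, Real.exp (θ * s - θ ^ 2 * T / 2) ∂μ)
    (hΘ : ∀ s, Θhat s = (∫ θ, θ * Real.exp (θ * s - θ ^ 2 * T / 2) ∂μ) / F s)
    (hFint : ∀ s, Integrable (fun θ : ℝ => Real.exp (θ * s - θ ^ 2 * T / 2)) μ)
    (hNint : ∀ s, Integrable (fun θ : ℝ => θ * Real.exp (θ * s - θ ^ 2 * T / 2)) μ)
    (φ : ℝ → ℝ)
    (hφ : ∀ z, φ z = Real.exp (-z ^ 2 / (2 * (T - t))) / Real.sqrt (2 * π * (T - t)))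
    (q : ℝ → ℝ → ℝ)
    (hq : ∀ γ < (1:ℝ), ∀ z, q z γ =
      F (y + z) ^ (1 / (1 - γ)) * φ z / ∫ w, F (y + w) ^ (1 / (1 - γ)) * φ w)
    (hqint : ∀ γ < (1:ℝ), Integrable (fun w => F (y + w) ^ (1 / (1 - γ)) * φ w))
    (hfint : ∀ γ < (1:ℝ), Integrable (fun z => Θhat (y + z) * q z γ))
    (f : ℝ → ℝ) (hf : ∀ γ < (1:ℝ), f γ = ∫ z, Θhat (y + z) * q z γ) :
    (∀ γ < (1:ℝ), 0 < f γ) ∧ MonotoneOn f (Set.Iio 1) := by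
  have hF0 (s : ℝ) : 0 < F s := hF s ▸ integral_exp_pos (hFint s)
  have hΘ0 (s : ℝ) : 0 < Θhat s := hΘ s ▸ div_pos (integral_pos_of_ae_pos
    (hsupp.mono fun θ hθ => mul_pos hθ (exp_pos _)) (hNint s)) (hF0 s)
  have hφ0 (z : ℝ) : 0 < φ z := hφ z ▸ div_pos (exp_pos _)
    (sqrt_pos.2 (mul_pos (mul_pos two_pos pi_pos) (sub_pos.2 htT)))
  have hFmono : Monotone F := fun s₁ s₂ hs => by
    rw [hF, hF]
    exact integral_mono_ae (hFint s₁) (hFint s₂)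
      (hsupp.mono fun θ hθ => exp_le_exp.2 (by nlinarith))
  have hΘmono : Monotone Θhat := by
    convert monotone_integral_mul_exp_div_integral_exp (μ := μ) _ hFint hNint with s
    rw [hΘ, hF]
  have hZ0 : ∀ γ < (1:ℝ), 0 < ∫ w, F (y + w) ^ (1 / (1 - γ)) * φ w := fun γ hγ =>
    integral_pos_of_ae_pos (ae_of_all _ fun w => mul_pos (rpow_pos_of_pos (hF0 _) _) (hφ0 w))
      (hqint γ hγ)
  refine ⟨fun γ hγ => ?_, fun γ₁ h₁ γ₂ h₂ hle => ?_⟩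
  · rw [hf γ hγ]
    refine integral_pos_of_ae_pos (ae_of_all _ fun z => ?_) (hfint γ hγ)
    rw [hq γ hγ]
    exact mul_pos (hΘ0 _) (div_pos (mul_pos (rpow_pos_of_pos (hF0 _) _) (hφ0 z)) (hZ0 γ hγ))
  · rw [hf γ₁ h₁, hf γ₂ h₂]
    simp only [hq γ₁ h₁, hq γ₂ h₂]
    exact integral_mul_rpow_mul_div_le (a := fun z => Θhat (y + z)) (g := fun z => F (y + z))
      (hΘmono.comp (monotone_id.const_add y))
      (hFmono.comp (monotone_id.const_add y)) (fun _ => hF0 _) (fun z => (hφ0 z).le)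
      (one_div_le_one_div_of_le (sub_pos.2 h₂) (by linarith [Set.mem_Iio.1 h₂]))
      (hqint γ₁ h₁) (hqint γ₂ h₂) (hZ0 γ₁ h₁) (hZ0 γ₂ h₂)
      (by simpa only [hq γ₁ h₁] using hfint γ₁ h₁) (by simpa only [hq γ₂ h₂] using hfint γ₂ h₂)

/-- with μ a probability measure supported on `(0,∞)` with finite first
moment, `F(T,y) = ∫ exp(θy - θ²T/2) dμ`, `Θ̂(T,y)` the posterior mean, and
`q(z;γ)` the normalized density `F(T,y+z)^{1/(1-γ)} φ_{T-t}(z)`, the function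
`f(γ) = ∫ Θ̂(T,y+z) q(z;γ) dz` is positive and monotone increasing on `(-∞,1)`. -/
theorem stmt5 (μ : Measure ℝ) [IsProbabilityMeasure μ]
    (hsupp : ∀ᵐ θ ∂μ, 0 < θ)
    (hmom : Integrable (fun θ : ℝ => |θ|) μ)
    (T t y : ℝ) (ht : 0 ≤ t) (htT : t < T)
    (F Θhat : ℝ → ℝ)
    (hF : ∀ s, F s = ∫ θ, Real.exp (θ * s - θ ^ 2 * T / 2) ∂μ)
    (hΘ : ∀ s, Θhat s = (∫ θ, θ * Real.exp (θ * s - θ ^ 2 * T / 2) ∂μ) / F s)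
    (hFint : ∀ s, Integrable (fun θ : ℝ => Real.exp (θ * s - θ ^ 2 * T / 2)) μ)
    (hNint : ∀ s, Integrable (fun θ : ℝ => θ * Real.exp (θ * s - θ ^ 2 * T / 2)) μ)
    (φ : ℝ → ℝ)
    (hφ : ∀ z, φ z = Real.exp (-z ^ 2 / (2 * (T - t))) / Real.sqrt (2 * π * (T - t)))
    (q : ℝ → ℝ → ℝ)
    (hq : ∀ γ < (1:ℝ), ∀ z, q z γ =
      F (y + z) ^ (1 / (1 - γ)) * φ z / ∫ w, F (y + w) ^ (1 / (1 - γ)) * φ w)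
    (hqint : ∀ γ < (1:ℝ), Integrable (fun w => F (y + w) ^ (1 / (1 - γ)) * φ w))
    (hfint : ∀ γ < (1:ℝ), Integrable (fun z => Θhat (y + z) * q z γ))
    (f : ℝ → ℝ) (hf : ∀ γ < (1:ℝ), f γ = ∫ z, Θhat (y + z) * q z γ) :
    (∀ γ < (1:ℝ), 0 < f γ) ∧ MonotoneOn f (Set.Iio 1) :=
  stmt5_general μ hsupp T t y htT F Θhat hF hΘ hFint hNint φ hφ q hq hqint hfint f hf
end

section
/- (Representation of the posterior mean as a Gaussian average) For 0 ≤ t < T, y ∈ ℝ: Θ̂(t,y) = ∫_ℝ Θ̂(T,y+z) · [F(T,y+z) φ_{T−t}(z) / ∫ F(T,y+w) φ_{T−t}(w) dw] dz, where F and Θ̂ are defined from a probability measure μ with finite first moment as F(t,y)=∫exp(θy−θ²t/2)dμ(θ) and Θ̂(t,y)=∫θ exp(θy−θ²t/2)dμ(θ)/F(t,y). -/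
/-!
Write `φ` as the density of the centred Gaussian `γ` of variance `T - t`. The Gaussian moment
generating function gives `∫ exp (θ (y + z) - θ² T / 2) dγ(z) = exp (θ y - θ² t / 2)`.
Integrating against `μ` with weight `1`, resp. `θ`, and exchanging the integrals turns the
denominator into `F(t, y)` and, since `Θ̂(T, ·) F(T, ·)` is the numerator integral at time `T`,
the numerator into `∫ θ exp (θ y - θ² t / 2) dμ`.
-/

open MeasureTheory Real ProbabilityTheory
open scoped NNReal

lemma integral_exp_mul_add_gaussianReal (θ y t : ℝ) (v : ℝ≥0) :
    ∫ z, exp (θ * (y + z) - θ ^ 2 * (t + v) / 2) ∂gaussianReal 0 v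
      = exp (θ * y - θ ^ 2 * t / 2) := by
  have hsplit : ∀ z, exp (θ * (y + z) - θ ^ 2 * (t + v) / 2)
      = exp (θ * y - θ ^ 2 * t / 2 - v * θ ^ 2 / 2) * exp (θ * z) := fun z => by
    rw [← exp_add]; ring_nf
  simp_rw [hsplit, integral_const_mul]
  rw [← mgf, mgf_fun_id_gaussianReal, ← exp_add]
  ring_nf

lemma integrable_exp_mul_add_gaussianReal (θ y s : ℝ) (v : ℝ≥0) :
    Integrable (fun z => exp (θ * (y + z) - θ ^ 2 * s / 2)) (gaussianReal 0 v) := by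
  have h := (integrable_exp_mul_gaussianReal (μ := 0) (v := v) θ).const_mul
    (exp (θ * y - θ ^ 2 * s / 2))
  refine h.congr (ae_of_all _ fun z => ?_)
  simp only [← exp_add]; ring_nf

lemma integral_gaussianReal_integral_mul_exp {f : ℝ → ℝ} (hf : Continuous f)
    (μ : Measure ℝ) [SFinite μ] (y t : ℝ) (v : ℝ≥0)
    (hint : Integrable (fun θ => f θ * exp (θ * y - θ ^ 2 * t / 2)) μ) :
    ∫ z, ∫ θ, f θ * exp (θ * (y + z) - θ ^ 2 * (t + v) / 2) ∂μ ∂gaussianReal 0 v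
      = ∫ θ, f θ * exp (θ * y - θ ^ 2 * t / 2) ∂μ := by
  have hinner : ∀ θ, ∫ z, f θ * exp (θ * (y + z) - θ ^ 2 * (t + v) / 2) ∂gaussianReal 0 v
      = f θ * exp (θ * y - θ ^ 2 * t / 2) := fun θ => by
    rw [integral_const_mul, integral_exp_mul_add_gaussianReal]
  have hprod : Integrable (fun p : ℝ × ℝ => f p.1 * exp (p.1 * (y + p.2) - p.1 ^ 2 * (t + v) / 2))
      (μ.prod (gaussianReal 0 v)) := by
    refine (integrable_prod_iff (by fun_prop)).2
      ⟨ae_of_all _ fun θ => (integrable_exp_mul_add_gaussianReal θ y _ v).const_mul (f θ), ?_⟩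
    refine hint.norm.congr (ae_of_all _ fun θ => ?_)
    simp only [norm_mul, norm_of_nonneg (exp_pos _).le]
    rw [integral_const_mul, integral_exp_mul_add_gaussianReal]
  rw [← integral_integral_swap hprod]
  simp_rw [hinner]

lemma gaussianPDFReal_zero_apply (v : ℝ≥0) (z : ℝ) :
    gaussianPDFReal 0 v z = exp (-z ^ 2 / (2 * v)) / √(2 * π * v) := by
  rw [gaussianPDFReal, sub_zero, inv_mul_eq_div]

theorem stmt7_general (μ : Measure ℝ) [IsProbabilityMeasure μ]
    (T t y : ℝ) (htT : t < T)
    (F Θhat : ℝ → ℝ → ℝ)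
    (hF : ∀ s u, F s u = ∫ θ, Real.exp (θ * u - θ ^ 2 * s / 2) ∂μ)
    (hΘ : ∀ s u, Θhat s u =
      (∫ θ, θ * Real.exp (θ * u - θ ^ 2 * s / 2) ∂μ) / F s u)
    (hFint : ∀ s u, Integrable (fun θ : ℝ => Real.exp (θ * u - θ ^ 2 * s / 2)) μ)
    (hNint : ∀ s u, Integrable (fun θ : ℝ => θ * Real.exp (θ * u - θ ^ 2 * s / 2)) μ)
    (φ : ℝ → ℝ)
    (hφ : ∀ z, φ z = Real.exp (-z ^ 2 / (2 * (T - t))) / Real.sqrt (2 * π * (T - t))) :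
    Θhat t y = ∫ z, Θhat T (y + z) *
      (F T (y + z) * φ z / ∫ w, F T (y + w) * φ w) := by
  obtain ⟨v, hv⟩ : ∃ v : ℝ≥0, (v : ℝ) = T - t :=
    ⟨(T - t).toNNReal, Real.coe_toNNReal _ (sub_nonneg.2 htT.le)⟩
  have hv0 : v ≠ 0 := NNReal.coe_ne_zero.1 (by rw [hv]; exact (sub_pos.2 htT).ne')
  have hγ : ∀ g : ℝ → ℝ, ∫ z, g z * φ z = ∫ z, g z ∂gaussianReal 0 v := fun g => by
    simp_rw [integral_gaussianReal_eq_integral_smul hv0, smul_eq_mul,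
      gaussianPDFReal_zero_apply, hφ, hv, mul_comm]
  obtain rfl : T = t + v := by linarith
  have hD : ∫ w, F (t + v) (y + w) * φ w = F t y := by
    simpa [hγ, hF] using integral_gaussianReal_integral_mul_exp (f := fun _ => 1)
      continuous_const μ y t v (by simpa using hFint t y)
  have hN : ∫ z, Θhat (t + v) (y + z) * (F (t + v) (y + z) * φ z)
      = ∫ θ, θ * exp (θ * y - θ ^ 2 * t / 2) ∂μ := by
    have hΘF : ∀ u, Θhat (t + v) u * F (t + v) u
        = ∫ θ, θ * exp (θ * u - θ ^ 2 * (t + v) / 2) ∂μ := fun u => by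
      rw [hΘ, div_mul_cancel₀ _ (hF _ u ▸ integral_exp_pos (hFint _ u)).ne']
    simp_rw [← mul_assoc, hγ, hΘF]
    exact integral_gaussianReal_integral_mul_exp continuous_id μ y t v (hNint t y)
  simp_rw [mul_div_assoc']
  rw [integral_div, hN, hD, hΘ]

/-- representation of the posterior mean as a Gaussian average:
`Θ̂(t,y) = ∫ Θ̂(T,y+z) · F(T,y+z) φ_{T-t}(z) dz / ∫ F(T,y+w) φ_{T-t}(w) dw`. -/
theorem stmt7 (μ : Measure ℝ) [IsProbabilityMeasure μ]
    (hmom : Integrable (fun θ : ℝ => |θ|) μ)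
    (T t y : ℝ) (ht : 0 ≤ t) (htT : t < T)
    (F Θhat : ℝ → ℝ → ℝ)
    (hF : ∀ s u, F s u = ∫ θ, Real.exp (θ * u - θ ^ 2 * s / 2) ∂μ)
    (hΘ : ∀ s u, Θhat s u =
      (∫ θ, θ * Real.exp (θ * u - θ ^ 2 * s / 2) ∂μ) / F s u)
    (hFint : ∀ s u, Integrable (fun θ : ℝ => Real.exp (θ * u - θ ^ 2 * s / 2)) μ)
    (hNint : ∀ s u, Integrable (fun θ : ℝ => θ * Real.exp (θ * u - θ ^ 2 * s / 2)) μ)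
    (φ : ℝ → ℝ)
    (hφ : ∀ z, φ z = Real.exp (-z ^ 2 / (2 * (T - t))) / Real.sqrt (2 * π * (T - t)))
    (hint1 : Integrable (fun z => Θhat T (y + z) * (F T (y + z) * φ z)))
    (hint2 : Integrable (fun w => F T (y + w) * φ w)) :
    Θhat t y = ∫ z, Θhat T (y + z) *
      (F T (y + z) * φ z / ∫ w, F T (y + w) * φ w) :=
  stmt7_general μ T t y htT F Θhat hF hΘ hFint hNint φ hφ
end

section
/- (Gaussian case: portfolio ratio is increasing in γ) For fixed v > 0, T > 0, t ∈ [0,T), the function R(γ) := (1−γ)(1+tv²)/((1−γ) − γv²T + v²t), defined for γ < (1+v²t)/(1+v²T), is positive, equals 1 at γ = 0, and is strictly monotone increasing in γ. -/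
/-!
With `a = 1 + v²t` and `b = 1 + v²T` the denominator is `a - γ b`, so `R` is the Möbius map
`γ ↦ (1 - γ) a / (a - γ b)`, whose pole sits at `a / b`. Since
`(1 - x)(a - y b) - (1 - y)(a - x b) = (y - x)(a - b)`, it is strictly increasing to the left
of the pole exactly when `a < b`, i.e. when `t < T`.
-/

open Set

noncomputable def portfolioRatio (a b γ : ℝ) : ℝ := (1 - γ) * a / (a - γ * b)

section portfolioRatio

variable {a b : ℝ}

lemma sub_mul_pos_of_lt_div (hb : 0 < b) {γ : ℝ} (hγ : γ < a / b) : 0 < a - γ * b :=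
  sub_pos.2 ((lt_div_iff₀ hb).1 hγ)

lemma portfolioRatio_zero (ha : a ≠ 0) : portfolioRatio a b 0 = 1 := by
  simp [portfolioRatio, ha]

lemma portfolioRatio_pos (ha : 0 < a) (hab : a ≤ b) {γ : ℝ} (hγ : γ < a / b) :
    0 < portfolioRatio a b γ := by
  have hb : 0 < b := ha.trans_le hab
  have hγ_lt_one : γ < 1 := hγ.trans_le ((div_le_one hb).2 hab)
  exact div_pos (mul_pos (sub_pos.2 hγ_lt_one) ha) (sub_mul_pos_of_lt_div hb hγ)

lemma strictMonoOn_portfolioRatio (ha : 0 < a) (hab : a < b) :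
    StrictMonoOn (portfolioRatio a b) (Iio (a / b)) := by
  have hb : 0 < b := ha.trans hab
  intro x hx y hy hxy
  rw [portfolioRatio, portfolioRatio,
    div_lt_div_iff₀ (sub_mul_pos_of_lt_div hb hx) (sub_mul_pos_of_lt_div hb hy)]
  have hcross : (1 - x) * a * (a - y * b) - (1 - y) * a * (a - x * b) = a * ((y - x) * (a - b)) := by
    ring
  have : a * ((y - x) * (a - b)) < 0 :=
    mul_neg_of_pos_of_neg ha (mul_neg_of_pos_of_neg (sub_pos.2 hxy) (sub_neg.2 hab))
  linarith

end portfolioRatio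

theorem stmt15_general (v T t : ℝ) (hv : 0 < v) (ht : 0 ≤ t) (htT : t < T)
    (R : ℝ → ℝ)
    (hR : ∀ γ ∈ Iio ((1 + v ^ 2 * t) / (1 + v ^ 2 * T)),
      R γ = (1 - γ) * (1 + t * v ^ 2) / ((1 - γ) - γ * v ^ 2 * T + v ^ 2 * t)) :
    (∀ γ ∈ Iio ((1 + v ^ 2 * t) / (1 + v ^ 2 * T)), 0 < R γ) ∧
    R 0 = 1 ∧
    StrictMonoOn R (Iio ((1 + v ^ 2 * t) / (1 + v ^ 2 * T))) := by
  have ha : 0 < 1 + v ^ 2 * t := by positivity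
  have hab : 1 + v ^ 2 * t < 1 + v ^ 2 * T := by gcongr
  have hR_eq : EqOn (portfolioRatio (1 + v ^ 2 * t) (1 + v ^ 2 * T)) R
      (Iio ((1 + v ^ 2 * t) / (1 + v ^ 2 * T))) := fun γ hγ => by
    rw [hR γ hγ, portfolioRatio]
    ring
  refine ⟨fun γ hγ => hR_eq hγ ▸ portfolioRatio_pos ha hab.le hγ, ?_,
    (strictMonoOn_portfolioRatio ha hab).congr hR_eq⟩
  have h0 : (0 : ℝ) ∈ Iio ((1 + v ^ 2 * t) / (1 + v ^ 2 * T)) := div_pos ha (ha.trans hab)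
  rw [← hR_eq h0, portfolioRatio_zero ha.ne']

/-- Gaussian case, the portfolio ratio
`R(γ) = (1-γ)(1+tv²)/((1-γ) - γv²T + v²t)`, defined for
`γ < (1+v²t)/(1+v²T)`, is positive, equals 1 at `γ = 0`, and is strictly
monotone increasing. -/
theorem stmt15 (v T t : ℝ) (hv : 0 < v) (hT : 0 < T) (ht : 0 ≤ t) (htT : t < T)
    (R : ℝ → ℝ)
    (hR : ∀ γ ∈ Iio ((1 + v ^ 2 * t) / (1 + v ^ 2 * T)),
      R γ = (1 - γ) * (1 + t * v ^ 2) / ((1 - γ) - γ * v ^ 2 * T + v ^ 2 * t)) :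
    (∀ γ ∈ Iio ((1 + v ^ 2 * t) / (1 + v ^ 2 * T)), 0 < R γ) ∧
    R 0 = 1 ∧
    StrictMonoOn R (Iio ((1 + v ^ 2 * t) / (1 + v ^ 2 * T))) :=
  stmt15_general v T t hv ht htT R hR
end
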